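/- Let Ω_1,...,Ω_p be nonempty closed convex sets in R^n, S a nonempty closed convex set disjoint from each Ω_i, α_i > 0, λ > 0, v ∈ R^n, and φ_v(x) = Σ_i α_i d(x; Ω_i) + (λ/2)‖x‖² − ⟨v, x⟩. Define F_v(x) = (Σ_i α_i P(x; Ω_i)/d(x; Ω_i) + v) / (Σ_i α_i/d(x; Ω_i) + λ) for x ∈ S. If x ∈ S and z̄ := P(F_v(x); S) ≠ x, then φ_v(z̄) < φ_v(x). -/

import Mathlib

/-!
With `P i := P(x; Ω i)` and weights `w i := α i / d(x; Ω i)`, the convex quadratic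
`g z = ∑ i, w i * ‖z - P i‖² + λ‖z‖² - 2⟪v, z⟫` equals `W‖z - F‖²` up to a constant, where
`W = ∑ i, w i + λ` and `F = F_v(x)`. So the projection `z̄` of `F` onto `S` satisfies
`g z̄ ≤ g x - W‖x - z̄‖² < g x`, by the obtuse-angle characterization of projections.
On the other hand `2 a d(z; Ω i) ≤ w i ‖z - P i‖² + a d(x; Ω i)` by AM-GM, with equality
at `z = x`; hence `2 φ_v ≤ g + c` with equality at `x`, and the descent of `g` passes to `φ_v`.
-/

open RealInnerProductSpace

open Classical in
noncomputable def proj (n : ℕ) (Q : Set (EuclideanSpace ℝ (Fin n)))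
    (x : EuclideanSpace ℝ (Fin n)) : EuclideanSpace ℝ (Fin n) :=
  if h : ∃ p ∈ Q, dist x p = Metric.infDist x Q then h.choose else x

noncomputable def phi (n p : ℕ) (Ω : Fin p → Set (EuclideanSpace ℝ (Fin n)))
    (α : Fin p → ℝ) (lam : ℝ) (v x : EuclideanSpace ℝ (Fin n)) : ℝ :=
  ∑ i, α i * Metric.infDist x (Ω i) + lam / 2 * ‖x‖ ^ 2 - (inner ℝ v x : ℝ)

noncomputable def Fmap (n p : ℕ) (Ω : Fin p → Set (EuclideanSpace ℝ (Fin n)))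
    (α : Fin p → ℝ) (lam : ℝ) (v x : EuclideanSpace ℝ (Fin n)) :
    EuclideanSpace ℝ (Fin n) :=
  (∑ i, α i / Metric.infDist x (Ω i) + lam)⁻¹ •
    ((∑ i, (α i / Metric.infDist x (Ω i)) • proj n (Ω i) x) + v)

lemma two_mul_le_sq_div_add {D r d : ℝ} (hd : 0 < d) (hDr : D ≤ r) :
    2 * D ≤ r ^ 2 / d + d := by
  rw [div_add' _ _ _ hd.ne', le_div_iff₀ hd]
  nlinarith [two_mul_le_add_sq r d]

section Surrogate

variable {E ι : Type*} [NormedAddCommGroup E] [InnerProductSpace ℝ E] [Fintype ι]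

noncomputable def surrogate (w : ι → ℝ) (P : ι → E) (lam : ℝ) (v z : E) : ℝ :=
  ∑ i, w i * ‖z - P i‖ ^ 2 + lam * ‖z‖ ^ 2 - 2 * ⟪v, z⟫

variable {w : ι → ℝ} {P : ι → E} {lam : ℝ} {v F : E}

lemma surrogate_eq (hF : (∑ i, w i + lam) • F = ∑ i, w i • P i + v) (z : E) :
    surrogate w P lam v z =
      (∑ i, w i + lam) * ‖z - F‖ ^ 2 + (∑ i, w i * ‖P i‖ ^ 2 - (∑ i, w i + lam) * ‖F‖ ^ 2) := by
  have hinner : (∑ i, w i + lam) * ⟪z, F⟫ = ∑ i, w i * ⟪z, P i⟫ + ⟪v, z⟫ := by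
    rw [← real_inner_smul_right, hF, inner_add_right, inner_sum, real_inner_comm v]
    simp only [real_inner_smul_right]
  simp only [surrogate, norm_sub_sq_real, mul_add, mul_sub, Finset.sum_add_distrib,
    Finset.sum_sub_distrib, ← Finset.sum_mul, mul_left_comm _ (2 : ℝ), ← Finset.mul_sum]
  linear_combination 2 * hinner

lemma surrogate_lt_of_inner_le_zero (hW : 0 < ∑ i, w i + lam)
    (hF : (∑ i, w i + lam) • F = ∑ i, w i • P i + v) {x z : E}
    (hobtuse : ⟪F - z, x - z⟫ ≤ 0) (hne : z ≠ x) :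
    surrogate w P lam v z < surrogate w P lam v x := by
  have hsplit : ‖x - F‖ ^ 2 = ‖x - z‖ ^ 2 - 2 * ⟪F - z, x - z⟫ + ‖F - z‖ ^ 2 := by
    rw [real_inner_comm, ← norm_sub_sq_real, sub_sub_sub_cancel_right]
  have hgap : 0 < ‖x - z‖ ^ 2 := by
    have : x - z ≠ 0 := sub_ne_zero.mpr hne.symm
    positivity
  rw [surrogate_eq hF, surrogate_eq hF, norm_sub_rev z F, add_lt_add_iff_right]
  nlinarith [mul_pos hW hgap, mul_nonneg hW.le (neg_nonneg.2 hobtuse)]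

end Surrogate

section Projection

variable {n : ℕ} {Q : Set (EuclideanSpace ℝ (Fin n))}

lemma proj_mem_and_dist_eq (hne : Q.Nonempty) (hc : IsClosed Q) (x : EuclideanSpace ℝ (Fin n)) :
    proj n Q x ∈ Q ∧ dist x (proj n Q x) = Metric.infDist x Q := by
  have h : ∃ q ∈ Q, dist x q = Metric.infDist x Q := by
    obtain ⟨y, hy, hd⟩ := hc.exists_infDist_eq_dist hne x
    exact ⟨y, hy, hd.symm⟩
  rw [proj, dif_pos h]
  exact h.choose_spec

lemma inner_sub_proj_sub_proj_nonpos (hne : Q.Nonempty) (hc : IsClosed Q) (hconv : Convex ℝ Q)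
    (x : EuclideanSpace ℝ (Fin n)) {y : EuclideanSpace ℝ (Fin n)} (hy : y ∈ Q) :
    ⟪x - proj n Q x, y - proj n Q x⟫ ≤ 0 := by
  obtain ⟨hmem, hdist⟩ := proj_mem_and_dist_eq hne hc x
  refine (norm_eq_iInf_iff_real_inner_le_zero hconv hmem).1 ?_ y hy
  rw [← dist_eq_norm, hdist, Metric.infDist_eq_iInf]
  simp_rw [dist_eq_norm]

end Projection

section Majorization

variable {n p : ℕ} {Ω : Fin p → Set (EuclideanSpace ℝ (Fin n))}
  (hΩ : ∀ i, (Ω i).Nonempty ∧ IsClosed (Ω i)) {α : Fin p → ℝ} (lam : ℝ)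
  (v : EuclideanSpace ℝ (Fin n)) {x : EuclideanSpace ℝ (Fin n)}
  (hd : ∀ i, 0 < Metric.infDist x (Ω i))
include hΩ hd

lemma two_mul_phi_le_surrogate (hα : ∀ i, 0 ≤ α i) (z : EuclideanSpace ℝ (Fin n)) :
    2 * phi n p Ω α lam v z ≤
      surrogate (fun i ↦ α i / Metric.infDist x (Ω i)) (fun i ↦ proj n (Ω i) x) lam v z +
        ∑ i, α i * Metric.infDist x (Ω i) := by
  have hterm : ∀ i, 2 * (α i * Metric.infDist z (Ω i)) ≤
      α i / Metric.infDist x (Ω i) * ‖z - proj n (Ω i) x‖ ^ 2 +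
        α i * Metric.infDist x (Ω i) := fun i ↦ by
    have hle : Metric.infDist z (Ω i) ≤ ‖z - proj n (Ω i) x‖ := by
      rw [← dist_eq_norm]
      exact Metric.infDist_le_dist_of_mem (proj_mem_and_dist_eq (hΩ i).1 (hΩ i).2 x).1
    have := mul_le_mul_of_nonneg_left (two_mul_le_sq_div_add (hd i) hle) (hα i)
    rw [div_mul_eq_mul_div, mul_div_assoc]
    linarith
  have hsum := Finset.sum_le_sum fun i (_ : i ∈ Finset.univ) ↦ hterm i
  rw [← Finset.mul_sum, Finset.sum_add_distrib] at hsum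
  simp only [phi, surrogate]
  linarith

lemma two_mul_phi_eq_surrogate :
    2 * phi n p Ω α lam v x =
      surrogate (fun i ↦ α i / Metric.infDist x (Ω i)) (fun i ↦ proj n (Ω i) x) lam v x +
        ∑ i, α i * Metric.infDist x (Ω i) := by
  have hterm : ∀ i, α i / Metric.infDist x (Ω i) * ‖x - proj n (Ω i) x‖ ^ 2 =
      α i * Metric.infDist x (Ω i) := fun i ↦ by
    rw [← dist_eq_norm, (proj_mem_and_dist_eq (hΩ i).1 (hΩ i).2 x).2]
    field_simp [(hd i).ne']
  simp only [phi, surrogate, hterm]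
  ring

end Majorization

lemma smul_Fmap {n p : ℕ} {Ω : Fin p → Set (EuclideanSpace ℝ (Fin n))} {α : Fin p → ℝ}
    {lam : ℝ} {v x : EuclideanSpace ℝ (Fin n)}
    (hW : ∑ i, α i / Metric.infDist x (Ω i) + lam ≠ 0) :
    (∑ i, α i / Metric.infDist x (Ω i) + lam) • Fmap n p Ω α lam v x =
      ∑ i, (α i / Metric.infDist x (Ω i)) • proj n (Ω i) x + v := by
  rw [Fmap, smul_smul, mul_inv_cancel₀ hW, one_smul]

theorem weiszfeld_strict_descent (n p : ℕ)
    (Ω : Fin p → Set (EuclideanSpace ℝ (Fin n)))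
    (hΩ : ∀ i, (Ω i).Nonempty ∧ IsClosed (Ω i) ∧ Convex ℝ (Ω i))
    (S : Set (EuclideanSpace ℝ (Fin n)))
    (hS : S.Nonempty) (hSc : IsClosed S) (hSconv : Convex ℝ S)
    (hdisj : ∀ i, S ∩ Ω i = ∅)
    (α : Fin p → ℝ) (hα : ∀ i, 0 < α i)
    (lam : ℝ) (hlam : 0 < lam)
    (v : EuclideanSpace ℝ (Fin n))
    (x : EuclideanSpace ℝ (Fin n)) (hx : x ∈ S)
    (zb : EuclideanSpace ℝ (Fin n)) (hzb : zb = proj n S (Fmap n p Ω α lam v x))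
    (hne : zb ≠ x) :
    phi n p Ω α lam v zb < phi n p Ω α lam v x := by
  have hΩ' : ∀ i, (Ω i).Nonempty ∧ IsClosed (Ω i) := fun i ↦ ⟨(hΩ i).1, (hΩ i).2.1⟩
  have hd : ∀ i, 0 < Metric.infDist x (Ω i) := fun i ↦
    ((hΩ i).2.1.notMem_iff_infDist_pos (hΩ i).1).1 fun hxΩ ↦
      (hdisj i).subset ⟨hx, hxΩ⟩
  have hW : 0 < ∑ i, α i / Metric.infDist x (Ω i) + lam :=
    add_pos_of_nonneg_of_pos (Finset.sum_nonneg fun i _ ↦ (div_pos (hα i) (hd i)).le) hlam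
  have hobtuse := inner_sub_proj_sub_proj_nonpos hS hSc hSconv (Fmap n p Ω α lam v x) hx
  rw [← hzb] at hobtuse
  have hdescent := surrogate_lt_of_inner_le_zero hW (smul_Fmap hW.ne') hobtuse hne
  have hle := two_mul_phi_le_surrogate hΩ' lam v hd (fun i ↦ (hα i).le) zb
  have heq := two_mul_phi_eq_surrogate hΩ' lam v hd (α := α)
  linarith
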